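/- arXiv:2203.16384 — 2 statements merged into one kernel-verified Lean document; each statement's English description precedes it below -/
import Mathlib

section
/- Let g : ℝ^d → ℝ^m with m ≥ 2 and assume g_k(x) > 0 for every x ∈ ℝ^d and every k = 1,…,m. Let x̄ ∈ ℝ^d be a weakly Pareto optimal point of g, and define the weights w̄_k := (g_k(x̄))^{-1} / Σ_{j=1}^m (g_j(x̄))^{-1} for k = 1,…,m. Then w̄ ∈ Ω and x̄ is a global minimizer of x ↦ G_∞(x, w̄), with minimal value G_∞(x̄, w̄) = (Σ_{j=1}^m (g_j(x̄))^{-1})^{-1}. -/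
/-- explicit weights witnessing the converse Chebyshev scalarization theorem:
for a weakly Pareto optimal point `x̄` of a positive `g`, the weights
`w̄ k = (g_k(x̄))⁻¹ / ∑ j, (g_j(x̄))⁻¹` lie in the probability simplex, `x̄` globally
minimizes `G_∞(·, w̄)`, and the minimal value is `(∑ j, (g_j(x̄))⁻¹)⁻¹`. -/
theorem weakly_pareto_explicit_chebyshev_weights
    (d m : ℕ) (hm : 2 ≤ m) (g : (Fin d → ℝ) → Fin m → ℝ)
    (hg : ∀ x k, 0 < g x k)
    (xbar : Fin d → ℝ)
    (hpareto : ¬ ∃ x : Fin d → ℝ, ∀ k, g x k < g xbar k)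
    (wbar : Fin m → ℝ)
    (hwbar : ∀ k, wbar k = (g xbar k)⁻¹ / ∑ j, (g xbar j)⁻¹) :
    (∀ k, 0 ≤ wbar k) ∧ (∑ k, wbar k = 1) ∧
      (∀ x : Fin d → ℝ,
        (⨆ k : Fin m, wbar k * |g xbar k|) ≤ ⨆ k : Fin m, wbar k * |g x k|) ∧
      (⨆ k : Fin m, wbar k * |g xbar k|) = (∑ j, (g xbar j)⁻¹)⁻¹ := by
  have hmpos : 0 < m := by omega
  haveI : Nonempty (Fin m) := ⟨⟨0, hmpos⟩⟩
  set S : ℝ := ∑ j, (g xbar j)⁻¹ with hSdef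
  have hS : 0 < S := Finset.sum_pos (fun j _ => inv_pos.2 (hg xbar j)) ⟨⟨0, hmpos⟩, Finset.mem_univ _⟩
  have hval : ∀ k, wbar k * |g xbar k| = S⁻¹ := by
    intro k
    rw [hwbar k, abs_of_pos (hg xbar k)]
    field_simp
    rw [div_self (hg xbar k).ne']
  have hsupbar : (⨆ k : Fin m, wbar k * |g xbar k|) = S⁻¹ := by
    simp only [hval]; exact ciSup_const
  refine ⟨fun k => by
      rw [hwbar k]
      exact div_nonneg (inv_nonneg.2 (hg xbar k).le) hS.le,
    ?_, ?_, hsupbar⟩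
  · have : ∑ k, wbar k = ∑ k, (g xbar k)⁻¹ / S := by
      exact Finset.sum_congr rfl fun k _ => hwbar k
    rw [this, ← Finset.sum_div, ← hSdef, div_self hS.ne']
  · intro x
    rw [hsupbar]
    push_neg at hpareto
    obtain ⟨k, hk⟩ := hpareto x
    have h1 : S⁻¹ ≤ wbar k * |g x k| := by
      rw [hwbar k, abs_of_pos (hg x k)]
      have : (g xbar k)⁻¹ / S * g xbar k ≤ (g xbar k)⁻¹ / S * g x k :=
        mul_le_mul_of_nonneg_left hk (div_nonneg (inv_nonneg.2 (hg xbar k).le) hS.le)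
      calc S⁻¹ = (g xbar k)⁻¹ / S * g xbar k := by
            field_simp
            rw [div_self (hg xbar k).ne']
        _ ≤ _ := this
    exact h1.trans (le_ciSup (Set.Finite.bddAbove (Set.finite_range (fun k => wbar k * |g x k|))) k)
end

section
/- Let g : ℝ^d → ℝ^m with m ≥ 2 and assume g_k(x) > 0 for every x ∈ ℝ^d and every k = 1,…,m. Then the set of weakly Pareto optimal points of g equals the union over w ∈ Ω of the sets of global minimizers of x ↦ G_∞(x,w). -/
/-! The weights `w_k ∝ 1 / g_k(x̄)` equalise all terms of `G_∞(x̄, w)`, so a point `x` with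
`G_∞(x, w) < G_∞(x̄, w)` would improve every objective at once. Conversely, if `x` improves every
objective of `x̄`, it strictly lowers each term of positive weight, while terms of zero weight stay
at `0`, below `G_∞(x̄, w) > 0`; so `x̄` cannot minimise `G_∞(·, w)`. -/

open Finset

variable {ι : Type*} [Fintype ι]

/-- `G_∞(x, w) = chebyshev w (g x)`. -/
noncomputable def chebyshev (w v : ι → ℝ) : ℝ := ⨆ k, w k * |v k|

lemma mul_abs_le_chebyshev (w v : ι → ℝ) (k : ι) : w k * |v k| ≤ chebyshev w v :=
  le_ciSup (f := fun k ↦ w k * |v k|) (Set.finite_range _).bddAbove k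

lemma chebyshev_lt_of_abs_lt {w u v : ι → ℝ} (hw : w ∈ stdSimplex ℝ ι)
    (huv : ∀ k, |u k| < |v k|) : chebyshev w u < chebyshev w v := by
  obtain ⟨j, -, hj⟩ : ∃ j ∈ univ, (0 : ι → ℝ) j < w j :=
    exists_lt_of_sum_lt (by simp [hw.2])
  have : Nonempty ι := ⟨j⟩
  obtain ⟨k, hk⟩ := exists_eq_ciSup_of_finite (f := fun k ↦ w k * |u k|)
  rw [chebyshev, ← hk]
  rcases (hw.1 k).eq_or_lt with h0 | hpos
  · calc w k * |u k| = 0 := by rw [← h0, zero_mul]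
      _ < w j * |v j| := mul_pos hj ((abs_nonneg _).trans_lt (huv j))
      _ ≤ chebyshev w v := mul_abs_le_chebyshev w v j
  · exact (mul_lt_mul_of_pos_left (huv k) hpos).trans_le (mul_abs_le_chebyshev w v k)

noncomputable def normalizedInv (v : ι → ℝ) : ι → ℝ := fun k ↦ (v k)⁻¹ / ∑ j, (v j)⁻¹

lemma normalizedInv_mem_stdSimplex [Nonempty ι] {v : ι → ℝ} (hv : ∀ k, 0 < v k) :
    normalizedInv v ∈ stdSimplex ℝ ι := by
  have hS : 0 < ∑ j, (v j)⁻¹ := sum_pos (fun j _ ↦ inv_pos.2 (hv j)) univ_nonempty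
  refine ⟨fun k ↦ div_nonneg (inv_pos.2 (hv k)).le hS.le, ?_⟩
  simp only [normalizedInv, ← sum_div, div_self hS.ne']

lemma chebyshev_normalizedInv_le {v u : ι → ℝ} (hv : ∀ k, 0 < v k) {k : ι}
    (hk : v k ≤ |u k|) : chebyshev (normalizedInv v) v ≤ chebyshev (normalizedInv v) u := by
  have : Nonempty ι := ⟨k⟩
  have hterm : ∀ j, normalizedInv v j * |v j| = (∑ i, (v i)⁻¹)⁻¹ := fun j ↦ by
    rw [normalizedInv, abs_of_pos (hv j)]
    field_simp [(hv j).ne']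
  calc chebyshev (normalizedInv v) v = normalizedInv v k * |v k| := by
        simp only [chebyshev, hterm, ciSup_const]
    _ ≤ normalizedInv v k * |u k| := by
        rw [abs_of_pos (hv k)]
        exact mul_le_mul_of_nonneg_left hk ((normalizedInv_mem_stdSimplex hv).1 k)
    _ ≤ chebyshev (normalizedInv v) u := mul_abs_le_chebyshev _ _ k

theorem weakly_pareto_eq_union_chebyshev_minimizers_general
    (d m : ℕ) (g : (Fin d → ℝ) → Fin m → ℝ)
    (hg : ∀ x k, 0 < g x k) :
    {xbar : Fin d → ℝ | ¬ ∃ x : Fin d → ℝ, ∀ k, g x k < g xbar k} =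
      ⋃ w ∈ {w : Fin m → ℝ | (∀ k, 0 ≤ w k) ∧ ∑ k, w k = 1},
        {xbar : Fin d → ℝ | ∀ x : Fin d → ℝ,
          (⨆ k : Fin m, w k * |g xbar k|) ≤ ⨆ k : Fin m, w k * |g x k|} := by
  ext a
  simp only [Set.mem_ofPred_eq, Set.mem_iUnion, exists_prop]
  constructor
  · intro ha
    push Not at ha
    obtain ⟨k₀, -⟩ := ha a
    have : Nonempty (Fin m) := ⟨k₀⟩
    refine ⟨normalizedInv (g a), normalizedInv_mem_stdSimplex (hg a), fun x ↦ ?_⟩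
    obtain ⟨k, hk⟩ := ha x
    exact chebyshev_normalizedInv_le (hg a) (hk.trans (le_abs_self _))
  · rintro ⟨w, hw, hmin⟩ ⟨x, hx⟩
    refine (hmin x).not_gt (chebyshev_lt_of_abs_lt hw fun k ↦ ?_)
    rw [abs_of_pos (hg x k), abs_of_pos (hg a k)]
    exact hx k

/-- For `g` with strictly positive components, the set of weakly Pareto
optimal points of `g` equals the union, over weight vectors `w` in the probability
simplex, of the sets of global minimizers of the weighted Chebyshev scalarization
`G_∞(·,w) = max_k w k * |g_k(·)|`. -/
theorem weakly_pareto_eq_union_chebyshev_minimizers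
    (d m : ℕ) (hm : 2 ≤ m) (g : (Fin d → ℝ) → Fin m → ℝ)
    (hg : ∀ x k, 0 < g x k) :
    {xbar : Fin d → ℝ | ¬ ∃ x : Fin d → ℝ, ∀ k, g x k < g xbar k} =
      ⋃ w ∈ {w : Fin m → ℝ | (∀ k, 0 ≤ w k) ∧ ∑ k, w k = 1},
        {xbar : Fin d → ℝ | ∀ x : Fin d → ℝ,
          (⨆ k : Fin m, w k * |g xbar k|) ≤ ⨆ k : Fin m, w k * |g x k|} :=
  weakly_pareto_eq_union_chebyshev_minimizers_general d m g hg
end
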